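/- arXiv:2012.12585 — 2 statements merged into one kernel-verified Lean document; each statement's English description precedes it below -/
import Mathlib

section
/- The second scaled Legendre polynomial P̃₂(s) = P₂(-1 + 2s/L), where P₂(t) = (3t² - 1)/2, satisfies L[P̃₂](s̄) = -3·P̃₂(s̄) for all s̄ ∈ (0, L), i.e. it is an eigenfunction of the finite-part operator with eigenvalue -λ₂ = -(2/1 + 2/2) = -3. -/
/-!
For a quadratic `f s = a s² + b s + c` the difference `f s - f t` factors as
`(s - t) (a (s + t) + b)`, so the integrand `(f s - f t) / |s - t|` is `∓ (a (s + t) + b)` on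
either side of `t` and the integral is elementary. For `P̃₂ s = 1 - 6 s / L + 6 s² / L²` the
result is `-3 P̃₂ t`.
-/

open MeasureTheory intervalIntegral Set

theorem integral_sub_mul_div_abs_sub {h : ℝ → ℝ} (hh : Continuous h) {u t v : ℝ}
    (hut : u ≤ t) (htv : t ≤ v) :
    ∫ s in u..v, (s - t) * h s / |s - t| = (∫ s in t..v, h s) - ∫ s in u..t, h s := by
  have left : EqOn (fun s ↦ (s - t) * h s / |s - t|) (fun s ↦ -h s) (Ioo u t) := by
    intro s hs
    have : s - t < 0 := sub_neg.2 hs.2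
    dsimp only
    rw [abs_of_neg this, div_neg, mul_div_cancel_left₀ _ this.ne]
  have right : EqOn (fun s ↦ (s - t) * h s / |s - t|) h (Ioo t v) := by
    intro s hs
    have : 0 < s - t := sub_pos.2 hs.1
    dsimp only
    rw [abs_of_pos this, mul_div_cancel_left₀ _ this.ne']
  have hleft : IntervalIntegrable (fun s ↦ (s - t) * h s / |s - t|) volume u t :=
    (hh.neg.intervalIntegrable u t).congr_uIoo (uIoo_of_le hut ▸ left.symm)
  have hright : IntervalIntegrable (fun s ↦ (s - t) * h s / |s - t|) volume t v :=
    (hh.intervalIntegrable t v).congr_uIoo (uIoo_of_le htv ▸ right.symm)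
  rw [← integral_add_adjacent_intervals hleft hright, integral_congr_Ioo_of_le hut left,
    integral_congr_Ioo_of_le htv right, intervalIntegral.integral_neg]
  ring

theorem integral_mul_add_add (a b t x y : ℝ) :
    ∫ s in x..y, (a * (s + t) + b) = a * ((y + t) ^ 2 - (x + t) ^ 2) / 2 + b * (y - x) := by
  have hint : IntervalIntegrable (fun s ↦ a * (s + t)) volume x y :=
    (by fun_prop : Continuous fun s ↦ a * (s + t)).intervalIntegrable x y
  rw [intervalIntegral.integral_add hint intervalIntegrable_const,
    intervalIntegral.integral_const_mul, intervalIntegral.integral_comp_add_right (fun s ↦ s),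
    integral_id, intervalIntegral.integral_const, smul_eq_mul]
  ring

theorem integral_quadratic_sub_div_abs_sub {f : ℝ → ℝ} {a b c : ℝ}
    (hf : ∀ s, f s = a * s ^ 2 + b * s + c) {u t v : ℝ} (hut : u ≤ t) (htv : t ≤ v) :
    ∫ s in u..v, (f s - f t) / |s - t| =
      a * ((v - t) * (v + 3 * t) - (t - u) * (3 * t + u)) / 2 + b * ((v - t) - (t - u)) := by
  have slope : ∀ s, f s - f t = (s - t) * (a * (s + t) + b) := fun s ↦ by rw [hf, hf]; ring
  simp_rw [slope]
  rw [integral_sub_mul_div_abs_sub (by fun_prop) hut htv, integral_mul_add_add,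
    integral_mul_add_add]
  ring

theorem stmt_7 (L : ℝ) (hL : 0 < L) (P2 Pt2 : ℝ → ℝ)
    (hP2 : ∀ t, P2 t = (3 * t ^ 2 - 1) / 2)
    (hPt2 : ∀ s, Pt2 s = P2 (-1 + 2 * s / L))
    (sbar : ℝ) (hs : sbar ∈ Set.Ioo 0 L) :
    ∫ s in (0 : ℝ)..L, (Pt2 s - Pt2 sbar) / |s - sbar| = -3 * Pt2 sbar := by
  have hquad : ∀ s, Pt2 s = 6 / L ^ 2 * s ^ 2 + -6 / L * s + 1 := fun s ↦ by
    rw [hPt2, hP2]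
    field_simp
    ring
  rw [integral_quadratic_sub_div_abs_sub hquad hs.1.le hs.2.le, hquad]
  field_simp
  ring
end

section
/- Let x : [0,L] → ℝ³ be a C³ unit-speed curve and f : [0,L] → ℝ³ continuously differentiable. Define, for s ≠ s̄, g(s,s̄) = [ (I + R̂R̂ᵀ)·(|s-s̄|/|R|)·f(s) − (I + x'(s̄)x'(s̄)ᵀ)·f(s̄) ] / (s - s̄), where R = x(s) − x(s̄) and R̂ = R/|R|. Then g(s,s̄) has a finite limit as s → s̄, equal to ½(x'(s̄) x''(s̄)ᵀ + x''(s̄) x'(s̄)ᵀ) f(s̄) + (I + x'(s̄) x'(s̄)ᵀ) f'(s̄). -/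
/-!
Write `S(R) f = |R|⁻¹ (f + ⟨R̂, f⟩ R̂)` for the Stokeslet and `v := dslope x s̄`, the difference
quotient `(x s - x s̄) / (s - s̄)` extended by `x'(s̄)`. Since `S` is even and homogeneous of
degree `-1`, `|s - s̄| S(x s - x s̄) = S(v s)`, so `g` is the difference quotient at `s̄` of
`G s = S(v s) (f s)`. By second-order Taylor expansion `v` is differentiable at `s̄` with
`v'(s̄) = x''(s̄) / 2`, and unit speed makes `x'' ⊥ x'`, so `‖v‖` is stationary at `s̄`;
the product rule for `G` gives the limit.
-/

open Set Asymptotics Topology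
open scoped RealInnerProductSpace

theorem hasDerivAt_dslope_same {E : Type*} [NormedAddCommGroup E]
    [NormedSpace ℝ E] {f f' : ℝ → E} {f'' : E} {a : ℝ}
    (hf : ∀ t, HasDerivAt f (f' t) t) (hf' : HasDerivAt f' f'' a) :
    HasDerivAt (dslope f a) ((2 : ℝ)⁻¹ • f'') a := by
  -- `e` is the second-order Taylor remainder; off `a`, `dslope f a` differs from its
  -- linearization at `a` by `e s / (s - a)`.
  set e : ℝ → E := fun s => f s - f a - (s - a) • f' a - ((s - a) ^ 2 / 2) • f''
  have he : ∀ t, HasDerivAt e (f' t - f' a - (t - a) • f'') t := fun t => by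
    have hs := (hasDerivAt_id t).sub_const a
    convert (((hf t).sub_const (f a)).sub (hs.smul_const (f' a))).sub
      (((hs.pow 2).div_const 2).smul_const f'') using 1
    · rfl
    · simp
  have he_o : e =o[𝓝 a] fun s => (s - a) ^ 2 := by
    simpa [e] using Convex.isLittleO_pow_succ_real convex_univ (mem_univ a) (n := 1)
      (fun t _ => (he t).hasDerivWithinAt) (by simpa using hasDerivAt_iff_isLittleO.mp hf')
  rw [hasDerivAt_iff_isLittleO]
  refine ((isBigO_refl (fun s => (s - a)⁻¹) (𝓝 a)).smul_isLittleO he_o).congr' ?_ ?_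
  · filter_upwards with s
    rcases eq_or_ne s a with rfl | hs
    · simp [e, dslope_same, (hf s).deriv]
    · rw [dslope_of_ne _ hs, slope_def_module, dslope_same, (hf a).deriv]
      simp only [e, smul_sub, smul_smul]
      have hsa : s - a ≠ 0 := sub_ne_zero.2 hs
      match_scalars <;> field_simp
  · filter_upwards with s
    rcases eq_or_ne s a with rfl | hs
    · simp
    · rw [smul_eq_mul]
      field_simp [sub_ne_zero.2 hs]

variable {F : Type*} [NormedAddCommGroup F] [InnerProductSpace ℝ F]

theorem inner_eq_zero_of_hasDerivWithinAt_of_norm_eq {γ : ℝ → F} {γ' : F} {s : Set ℝ}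
    {t r : ℝ} (hs : UniqueDiffWithinAt ℝ s t) (ht : t ∈ s) (hγs : ∀ u ∈ s, ‖γ u‖ = r)
    (hγ : HasDerivWithinAt γ γ' s t) : ⟪γ t, γ'⟫ = 0 := by
  have hconst : HasDerivWithinAt (‖γ ·‖ ^ 2) 0 s t :=
    (hasDerivWithinAt_const t s (r ^ 2)).congr (fun u hu => by simp [hγs u hu])
      (by simp [hγs t ht])
  simpa using hs.eq_deriv s hγ.norm_sq hconst

theorem HasDerivAt.norm_of_inner_eq_zero {v : ℝ → F} {v' : F} {t : ℝ}
    (hv : HasDerivAt v v' t) (h0 : ⟪v t, v'⟫ = 0) (hvt : v t ≠ 0) :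
    HasDerivAt (‖v ·‖) 0 t := by
  have h := hv.norm_sq.sqrt (by simpa using hvt)
  simp only [h0, mul_zero, zero_div] at h
  simpa [Real.sqrt_sq (norm_nonneg _)] using h

/-- The Stokeslet `(I + R̂ R̂ᵀ) / |R|` applied to `f`, where `R̂ = R / |R|`. -/
noncomputable def stokeslet (R f : F) : F :=
  ‖R‖⁻¹ • (f + ⟪‖R‖⁻¹ • R, f⟫ • (‖R‖⁻¹ • R))

theorem stokeslet_of_norm_eq_one {R : F} (hR : ‖R‖ = 1) (f : F) :
    stokeslet R f = f + ⟪R, f⟫ • R := by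
  simp [stokeslet, hR]

theorem abs_smul_stokeslet_smul {t : ℝ} (ht : t ≠ 0) (R f : F) :
    |t| • stokeslet (t • R) f = stokeslet R f := by
  have hsq : |t| ^ 2 = t ^ 2 := sq_abs t
  have habs : |t| ≠ 0 := abs_ne_zero.2 ht
  simp only [stokeslet, norm_smul, Real.norm_eq_abs, mul_inv, smul_smul, real_inner_smul_left,
    smul_add]
  match_scalars
  · field_simp
  · field_simp
    rw [hsq]

theorem HasDerivAt.stokeslet {v f : ℝ → F} {v' f' : F} {t : ℝ}
    (hv : HasDerivAt v v' t) (hf : HasDerivAt f f' t) (h1 : ‖v t‖ = 1) (h0 : ⟪v t, v'⟫ = 0) :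
    HasDerivAt (fun s => stokeslet (v s) (f s))
      (f' + (⟪v', f t⟫ + ⟪v t, f'⟫) • v t + ⟪v t, f t⟫ • v') t := by
  have hvt : v t ≠ 0 := norm_ne_zero_iff.1 (by simp [h1])
  have hn : HasDerivAt (fun s => ‖v s‖⁻¹) 0 t := by
    simpa [h1] using (hv.norm_of_inner_eq_zero h0 hvt).fun_inv (by simp [h1])
  have hu : HasDerivAt (fun s => ‖v s‖⁻¹ • v s) v' t := by
    simpa [h1] using hn.fun_smul hv
  convert hn.fun_smul (hf.fun_add ((hu.inner ℝ hf).fun_smul hu)) using 1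
  · rfl
  · simp [h1]
    module

theorem stmt_14 (L : ℝ) (hL : 0 < L) (x f : ℝ → EuclideanSpace ℝ (Fin 3))
    (hx : ContDiff ℝ 3 x) (hf : ContDiff ℝ 1 f)
    (hunit : ∀ s ∈ Set.Icc (0 : ℝ) L, ‖deriv x s‖ = 1)
    (sbar : ℝ) (hs : sbar ∈ Set.Icc (0 : ℝ) L)
    (g : ℝ → EuclideanSpace ℝ (Fin 3))
    (hg : ∀ s,
      g s = (s - sbar)⁻¹ •
        ((|s - sbar| / ‖x s - x sbar‖) •
            (f s + (inner ℝ (‖x s - x sbar‖⁻¹ • (x s - x sbar)) (f s) : ℝ) •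
              (‖x s - x sbar‖⁻¹ • (x s - x sbar)))
          - (f sbar + (inner ℝ (deriv x sbar) (f sbar) : ℝ) • deriv x sbar))) :
    Filter.Tendsto g (nhdsWithin sbar (Set.Icc (0 : ℝ) L \ {sbar}))
      (nhds ((1 / 2 : ℝ) •
          ((inner ℝ (deriv (deriv x) sbar) (f sbar) : ℝ) • deriv x sbar
            + (inner ℝ (deriv x sbar) (f sbar) : ℝ) • deriv (deriv x) sbar)
        + deriv f sbar
        + (inner ℝ (deriv x sbar) (deriv f sbar) : ℝ) • deriv x sbar)) := by
  have hx₁ (t : ℝ) : HasDerivAt x (deriv x t) t :=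
    (hx.differentiable (by norm_num) t).hasDerivAt
  have hx₂ (t : ℝ) : HasDerivAt (deriv x) (deriv (deriv x) t) t :=
    ((hx.deriv' (n := 2)).differentiable (by norm_num) t).hasDerivAt
  have hTA : ⟪deriv x sbar, deriv (deriv x) sbar⟫ = 0 :=
    inner_eq_zero_of_hasDerivWithinAt_of_norm_eq (uniqueDiffOn_Icc hL sbar hs) hs hunit
      (hx₂ sbar).hasDerivWithinAt
  have hG := (hasDerivAt_dslope_same hx₁ (hx₂ sbar)).stokeslet
    (hf.differentiable one_ne_zero sbar).hasDerivAt (by rw [dslope_same]; exact hunit sbar hs)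
    (by rw [dslope_same, inner_smul_right, hTA, mul_zero])
  rw [hasDerivAt_iff_tendsto_slope, dslope_same] at hG
  convert (hG.mono_left (nhdsWithin_mono _ (sdiff_subset_compl _ _))).congr' ?_ using 1
  · exact congrArg nhds (by rw [real_inner_smul_left]; module)
  · filter_upwards [self_mem_nhdsWithin] with s hsL
    rw [hg, slope_def_module, div_eq_mul_inv, mul_smul]
    change _ = _ • (|s - sbar| • stokeslet (x s - x sbar) (f s) - _)
    rw [← sub_smul_dslope x sbar s, abs_smul_stokeslet_smul (sub_ne_zero.2 hsL.2), dslope_same,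
      stokeslet_of_norm_eq_one (hunit sbar hs)]
end
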